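/- Let f : S → T be a monotone morphism of ordered face structures and a a face of T. If f^{−1}(a) is nonempty, then all faces in f^{−1}(a) are pairwise parallel and f^{−1}(a) is linearly ordered by <^+; moreover there exist b, c ∈ f^{−1}(a) and a flat upper path b, α_1, …, α_r, c through unary faces not in γ(S^{−λ}) such that f^{−1}(a) = {b} ∪ {γ(α_i) : 1 ≤ i ≤ r}. -/

import Mathlib

/-!  Ordered face structures, following M. Zawadowski,
"On ordered face structures and many-to-one computads".

We encode the graded set of faces as `F : ℕ → Type`, where `F (k+1)` is the set
of faces of dimension `k`, and `F 0` is an empty type playing the role of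
`S₋₁`.  The codomain of a face of dimension `k+1` is a face of dimension `k`,
and its domain `δ` is a set of elements of `F (k+1) ⊕ F k`, where `Sum.inl x`
is a genuine face `x` and `Sum.inr u` stands for the empty face `1ᵤ` on `u`.
-/

structure PreOFS where
  F : ℕ → Type
  γ : ∀ {k : ℕ}, F (k + 2) → F (k + 1)
  δ : ∀ {k : ℕ}, F (k + 2) → Set (F (k + 1) ⊕ F k)
  sim : ∀ {k : ℕ}, F (k + 1) → F (k + 1) → Prop

namespace PreOFS

variable (S : PreOFS)

/-- The genuine (non-empty) faces in the domain of `a`. -/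
def realDom {k : ℕ} (a : S.F (k + 2)) : Set (S.F (k + 1)) :=
  {x | Sum.inl x ∈ S.δ a}

/-- `a` has empty domain (`δ(a) = 1ᵤ`). -/
def isEps {k : ℕ} (a : S.F (k + 2)) : Prop :=
  ∃ u, Sum.inr u ∈ S.δ a

/-- `a` is a loop (`δ(a) = γ(a)` as sets). -/
def isLoop {k : ℕ} (a : S.F (k + 2)) : Prop :=
  S.δ a = {Sum.inl (S.γ a)}

/-- Codomain of a generalized face (`γ(1ᵤ) = u`). -/
def cod {k : ℕ} : S.F (k + 2) ⊕ S.F (k + 1) → S.F (k + 1)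
  | Sum.inl x => S.γ x
  | Sum.inr u => u

/-- Domain of a generalized face (`δ(1ᵤ) = u`). -/
def domM {k : ℕ} : S.F (k + 2) ⊕ S.F (k + 1) → Set (S.F (k + 1) ⊕ S.F k)
  | Sum.inl x => S.δ x
  | Sum.inr u => {Sum.inl u}

/-- `δ̇⁻ᵞ(a)`: the non-loop genuine faces in the domain of `a`. -/
def nlDom {k : ℕ} (a : S.F (k + 3)) : Set (S.F (k + 2)) :=
  {x | Sum.inl x ∈ S.δ a ∧ ¬ S.isLoop x}

/-- The strict upper order `<⁺`. -/
def ltP {k : ℕ} : S.F (k + 1) → S.F (k + 1) → Prop :=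
  Relation.TransGen
    (fun a b => ∃ α : S.F (k + 2), ¬ S.isLoop α ∧ Sum.inl a ∈ S.δ α ∧ S.γ α = b)

def leP {k : ℕ} (a b : S.F (k + 1)) : Prop := a = b ∨ S.ltP a b

/-- Comparability under `<⁺`. -/
def perpP {k : ℕ} (a b : S.F (k + 1)) : Prop := S.ltP a b ∨ S.ltP b a

/-- Comparability under `<∼`. -/
def perpS {k : ℕ} (a b : S.F (k + 1)) : Prop := S.sim a b ∨ S.sim b a

/-- The lower relation `<⁻`. -/
def ltM {k : ℕ} : S.F (k + 2) → S.F (k + 2) → Prop :=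
  Relation.TransGen (fun a b => Sum.inl (S.γ a) ∈ S.δ b)

/-- `θ(a) = δ(a) ∪ γ(a)` (with empty faces). -/
def thetaFull {k : ℕ} (a : S.F (k + 2)) : Set (S.F (k + 1) ⊕ S.F k) :=
  insert (Sum.inl (S.γ a)) (S.δ a)

/-- `θ̇(a)`: the genuine faces in `δ(a) ∪ γ(a)`. -/
def thetaDot {k : ℕ} (a : S.F (k + 2)) : Set (S.F (k + 1)) :=
  insert (S.γ a) (S.realDom a)

/-- `ι(b)`: the internal faces of `b`. -/
def iota {k : ℕ} (b : S.F (k + 3)) : Set (S.F (k + 1)) :=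
  {u | ∃ x ∈ S.nlDom b, ∃ y ∈ S.nlDom b, S.γ x = u ∧ u ∈ S.realDom y}

/-- `A ≡₁ B` : equality of sets of generalized faces modulo empty faces. -/
def eq1 {k : ℕ} (A B : Set (S.F (k + 2) ⊕ S.F (k + 1))) : Prop :=
  {x : S.F (k + 2) | Sum.inl x ∈ A} = {x : S.F (k + 2) | Sum.inl x ∈ B} ∧
    ({u : S.F (k + 1) | Sum.inr u ∈ A} ∪
        ⋃ x ∈ {x : S.F (k + 2) | Sum.inl x ∈ A}, S.thetaDot x) =
      ({u : S.F (k + 1) | Sum.inr u ∈ B} ∪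
        ⋃ x ∈ {x : S.F (k + 2) | Sum.inl x ∈ B}, S.thetaDot x)

end PreOFS

namespace PreOFS

/-- Iterated codomain, going down `j` dimensions. -/
def down (S : PreOFS) : ∀ (k j : ℕ), S.F (k + j + 1) → S.F (k + 1)
  | _, 0, a => a
  | k, j + 1, a => down S k j (S.γ a)

/-- `γ⁽ˡ⁾` : iterated codomain down to dimension `l`. -/
def gIter (S : PreOFS) {k : ℕ} (l : ℕ) (h : l ≤ k) (a : S.F (k + 1)) : S.F (l + 1) :=
  down S l (k - l) (_root_.cast (congrArg S.F (by omega : k + 1 = l + (k - l) + 1)) a)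

/-- The combined order `<^S`. -/
def ltS (S : PreOFS) {k : ℕ} (a b : S.F (k + 1)) : Prop :=
  S.ltP a b ∨ ∃ l : ℕ, ∃ h : l ≤ k, S.sim (S.gIter l h a) (S.gIter l h b)

end PreOFS

/-- The axioms of an ordered face structure. -/
structure IsOFS (S : PreOFS) : Prop where
  empty_bot : IsEmpty (S.F 0)
  fin : ∀ k, Finite (S.F k)
  bdd : ∃ n, ∀ k, n < k → IsEmpty (S.F k)
  nonempty₀ : Nonempty (S.F 1)
  dom_nonempty : ∀ {k : ℕ} (a : S.F (k + 2)), (S.δ a).Nonempty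
  dom_eps : ∀ {k : ℕ} (a : S.F (k + 2)) (u : S.F k),
    Sum.inr u ∈ S.δ a → S.δ a = {Sum.inr u}
  dom_dim1 : ∀ a : S.F 2, ∃ x, S.δ a = {Sum.inl x}
  glob_γ : ∀ {k : ℕ} (a : S.F (k + 3)),
    ({S.γ (S.γ a)} : Set (S.F (k + 1))) =
      {y | ∃ e ∈ S.δ a, S.cod e = y} \ (⋃ x ∈ S.nlDom a, S.realDom x)
  glob_δ_low : ∀ a : S.F 3,
    S.realDom (S.γ a) =
      (⋃ e ∈ S.δ a, {x : S.F 1 | Sum.inl x ∈ S.domM e}) \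
        {y : S.F 1 | ∃ x ∈ S.nlDom a, S.γ x = y}
  glob_δ : ∀ {k : ℕ} (a : S.F (k + 4)),
    S.eq1 (S.δ (S.γ a))
      ((⋃ e ∈ S.δ a, S.domM e) \
        {e : S.F (k + 2) ⊕ S.F (k + 1) | ∃ x ∈ S.nlDom a, Sum.inl (S.γ x) = e})
  local_disc : ∀ {k : ℕ} (a : S.F (k + 2)) (x y : S.F (k + 1)),
    Sum.inl x ∈ S.δ a → Sum.inl y ∈ S.δ a → ¬ S.ltP x y
  strictP : ∀ {k : ℕ} (x : S.F (k + 1)), ¬ S.ltP x x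
  linearP₀ : ∀ x y : S.F 1, x = y ∨ S.ltP x y ∨ S.ltP y x
  sim_irrefl : ∀ {k : ℕ} (x : S.F (k + 1)), ¬ S.sim x x
  sim_trans : ∀ {k : ℕ} (x y z : S.F (k + 1)), S.sim x y → S.sim y z → S.sim x z
  disj : ∀ {k : ℕ} (x y : S.F (k + 1)), S.perpS x y → ¬ S.perpP x y
  sim_lt_minus : ∀ {k : ℕ} (a b : S.F (k + 2)), S.sim a b → S.ltM a b
  sim_dim0 : ∀ x y : S.F 1, ¬ S.sim x y
  disj_theta : ∀ {k : ℕ} (a b : S.F (k + 2)),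
    S.thetaFull a ∩ S.thetaFull b = ∅ → (S.sim a b ↔ S.ltM a b)
  pencil₁ : ∀ {k : ℕ} (a b : S.F (k + 2)), a ≠ b →
    (S.thetaDot a ∩ S.thetaDot b).Nonempty → S.perpS a b ∨ S.perpP a b
  pencil₂ : ∀ {k : ℕ} (a b : S.F (k + 3)), S.isEps a →
    S.γ (S.γ a) ∈ S.iota b → S.sim a b ∨ S.ltP a b
  loop_fill : ∀ {k : ℕ} (x : S.F (k + 2)), S.isLoop x →
    ∃ α : S.F (k + 3), ¬ S.isLoop α ∧ S.γ α = x

/-- A monotone morphism of ordered face structures: it commutes with `γ`,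
restricts to a bijection between the (genuine) domains, preserves empty
domains, and preserves the order `<∼`. -/
structure IsOFSHom (S T : PreOFS) (f : ∀ k, S.F k → T.F k) : Prop where
  map_γ : ∀ {k : ℕ} (a : S.F (k + 2)), f (k + 1) (S.γ a) = T.γ (f (k + 2) a)
  map_eps : ∀ {k : ℕ} (a : S.F (k + 2)) (u : S.F k),
    Sum.inr u ∈ S.δ a → T.δ (f (k + 2) a) = {Sum.inr (f k u)}
  map_dom : ∀ {k : ℕ} (a : S.F (k + 2)),
    Set.BijOn (f (k + 1)) (S.realDom a) (T.realDom (f (k + 2) a))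
  map_sim : ∀ {k : ℕ} (x y : S.F (k + 1)), S.sim x y → T.sim (f (k + 1) x) (f (k + 1) y)


/-!
Induction on the dimension. A fibre linearly ordered by `<⁺`, listed as `z 0 <⁺ ⋯ <⁺ z r`, has
consecutive elements joined by unary non-loops outside `γ(S^{−λ})`. One dimension up, two faces
`x, y` of a fibre share their codomain: otherwise the pencil axioms, applied along the connecting
faces from `γ x` to `γ y`, give `x <∼ B` for the last one, `B`, and relate `y` to `B` in a way
incompatible with `f x = f y`. The pencil axiom then makes `x` and `y` `<⁺`- or `<∼`-comparable,
and `f` excludes `<∼`. Parallelism follows by globularity along the connecting faces.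
-/

open Relation Set

theorem exists_enum_of_trichotomous {α : Type*} [Finite α] {R : α → α → Prop} [IsTrans α R]
    [Std.Irrefl R] {A : Set α} (hA : A.Nonempty)
    (htri : ∀ x ∈ A, ∀ y ∈ A, x = y ∨ R x y ∨ R y x) :
    ∃ (r : ℕ) (z : ℕ → α), (∀ x, x ∈ A ↔ ∃ i ≤ r, z i = x) ∧
      ∀ {i j}, i < j → j ≤ r → R (z i) (z j) := by
  induction hn : A.ncard using Nat.strong_induction_on generalizing A with
  | _ n ih =>
  obtain ⟨x₀, hx₀, hmin⟩ := (Finite.wellFounded_of_trans_of_irrefl R).has_min A hA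
  have hx₀lt : ∀ y ∈ A \ {x₀}, R x₀ y := fun y ⟨hy, hne⟩ =>
    ((htri _ hx₀ _ hy).resolve_left (Ne.symm hne)).resolve_right (hmin y hy)
  rcases (A \ {x₀}).eq_empty_or_nonempty with hA' | hA'
  · refine ⟨0, fun _ => x₀, fun x => ⟨fun hx => ⟨0, le_rfl, ?_⟩, ?_⟩, by omega⟩
    · by_contra hne
      exact hA'.subset ⟨hx, Ne.symm hne⟩
    · rintro ⟨_, -, rfl⟩
      exact hx₀
  obtain ⟨r, z, hz, hzlt⟩ := ih _ (hn ▸ ncard_sdiff_singleton_lt_of_mem hx₀ A.toFinite) hA'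
    (fun x hx y hy => htri x hx.1 y hy.1) rfl
  refine ⟨r + 1, fun | 0 => x₀ | i + 1 => z i, fun x => ⟨fun hx => ?_, ?_⟩, fun {i j} hij hj => ?_⟩
  · by_cases hx₀x : x = x₀
    · exact ⟨0, by omega, hx₀x.symm⟩
    · obtain ⟨i, hi, rfl⟩ := (hz x).1 ⟨hx, hx₀x⟩
      exact ⟨i + 1, by omega, rfl⟩
  · rintro ⟨_ | i, hi, rfl⟩
    · exact hx₀
    · exact ((hz _).2 ⟨i, by omega, rfl⟩).1
  · obtain ⟨j, rfl⟩ : ∃ j', j = j' + 1 := ⟨j - 1, by omega⟩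
    rcases i with _ | i
    · exact hx₀lt _ ((hz _).2 ⟨j, by omega, rfl⟩)
    · exact hzlt (by omega) (by omega)

namespace PreOFS

def ltPStep (S : PreOFS) {k : ℕ} (a b : S.F (k + 1)) : Prop :=
  ∃ α : S.F (k + 2), ¬ S.isLoop α ∧ Sum.inl a ∈ S.δ α ∧ S.γ α = b

def ltPStepIn (S : PreOFS) {k : ℕ} (Φ : S.F (k + 3)) (a b : S.F (k + 1)) : Prop :=
  ∃ α ∈ S.nlDom Φ, Sum.inl a ∈ S.δ α ∧ S.γ α = b

variable {S : PreOFS} {k : ℕ}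

theorem ltPStepIn.ltPStep {Φ : S.F (k + 3)} {a b : S.F (k + 1)} (h : S.ltPStepIn Φ a b) :
    S.ltPStep a b :=
  let ⟨α, hα, ha, hb⟩ := h
  ⟨α, hα.2, ha, hb⟩

theorem leP_iff_reflTransGen {a b : S.F (k + 1)} :
    S.leP a b ↔ ReflTransGen S.ltPStep a b := by
  rw [reflTransGen_iff_eq_or_transGen, eq_comm]
  rfl

theorem leP.trans {a b c : S.F (k + 1)} (hab : S.leP a b) (hbc : S.leP b c) : S.leP a c := by
  rw [leP_iff_reflTransGen] at *
  exact hab.trans hbc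

theorem leP_γ_of_mem_realDom {s : S.F (k + 1)} {v : S.F (k + 2)} (h : s ∈ S.realDom v) :
    S.leP s (S.γ v) := by
  by_cases hv : S.isLoop v
  · rw [isLoop] at hv
    left
    simpa [realDom, hv] using h
  · exact Or.inr (.single ⟨v, hv, h, rfl⟩)

theorem exists_mem_realDom_of_ltM {u v : S.F (k + 2)} (h : S.ltM u v) :
    ∃ s ∈ S.realDom v, S.leP (S.γ u) s := by
  induction h with
  | single h => exact ⟨_, h, Or.inl rfl⟩
  | tail _ h ih =>
    obtain ⟨s, hs, hus⟩ := ih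
    exact ⟨_, h, hus.trans (leP_γ_of_mem_realDom hs)⟩

theorem γ_leP_γ_of_ltM {u v : S.F (k + 2)} (h : S.ltM u v) : S.leP (S.γ u) (S.γ v) :=
  let ⟨_, hs, hus⟩ := exists_mem_realDom_of_ltM h
  hus.trans (leP_γ_of_mem_realDom hs)

theorem not_ltP_of_not_cod {x B : S.F (k + 2)}
    (hB : ¬ ∃ Φ : S.F (k + 3), ¬ S.isLoop Φ ∧ S.γ Φ = B) : ¬ S.ltP x B := fun h =>
  let ⟨_, _, Φ, hΦ, _, hΦB⟩ := TransGen.tail'_iff.1 h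
  hB ⟨Φ, hΦ, hΦB⟩

theorem reflTransGen_ltPStepIn_of_mem_domM {Φ : S.F (k + 3)} {E : S.F (k + 2) ⊕ S.F (k + 1)}
    (hE : E ∈ S.δ Φ) {u : S.F (k + 1)} (hu : Sum.inl u ∈ S.domM E) :
    ReflTransGen (S.ltPStepIn Φ) u (S.cod E) := by
  rcases E with e | w
  · by_cases he : S.isLoop e
    · rw [isLoop] at he
      obtain rfl : u = S.γ e := by simpa [domM, he] using hu
      rfl
    · exact .single ⟨e, ⟨hE, he⟩, hu, rfl⟩
  · obtain rfl : u = w := by simpa [domM] using hu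
    rfl

end PreOFS

namespace IsOFS

open PreOFS

variable {S : PreOFS} {k : ℕ}

theorem not_leP_of_ltP (hS : IsOFS S) {a b : S.F (k + 1)} (h : S.ltP a b) : ¬ S.leP b a := by
  rintro (rfl | h')
  · exact hS.strictP _ h
  · exact hS.strictP _ (h.trans h')

theorem leP_antisymm (hS : IsOFS S) {a b : S.F (k + 1)} (hab : S.leP a b) (hba : S.leP b a) :
    a = b := by
  rcases hab with rfl | hab
  · rfl
  · exact absurd hba (hS.not_leP_of_ltP hab)

theorem isLoop_of_inl_γ_mem_δ (hS : IsOFS S) {a : S.F (k + 2)}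
    (h : Sum.inl (S.γ a) ∈ S.δ a) : S.isLoop a :=
  by_contra fun hl => hS.strictP _ (.single ⟨a, hl, h, rfl⟩)

theorem isStrictOrder_ltP (hS : IsOFS S) : IsStrictOrder (S.F (k + 1)) S.ltP where
  irrefl := hS.strictP
  trans _ _ _ := TransGen.trans

theorem wellFounded_ltP (hS : IsOFS S) : WellFounded (S.ltP (k := k)) :=
  have := hS.fin (k + 1)
  have := hS.isStrictOrder_ltP (k := k)
  Finite.wellFounded_of_trans_of_irrefl _

theorem wellFounded_gtP (hS : IsOFS S) : WellFounded (Function.swap (S.ltP (k := k))) :=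
  have := hS.fin (k + 1)
  have := hS.isStrictOrder_ltP (k := k)
  Finite.wellFounded_of_trans_of_irrefl _

theorem inl_mem_δ_γ_iff (hS : IsOFS S) (Φ : S.F (k + 3)) (x : S.F (k + 1)) :
    Sum.inl x ∈ S.δ (S.γ Φ) ↔
      (∃ E ∈ S.δ Φ, Sum.inl x ∈ S.domM E) ∧ ∀ w ∈ S.nlDom Φ, S.γ w ≠ x := by
  cases k with
  | zero =>
    have h := Set.ext_iff.mp (hS.glob_δ_low Φ) x
    simp only [realDom, mem_ofPred_eq, mem_sdiff, mem_iUnion, exists_prop, not_exists,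
      not_and] at h
    exact h
  | succ k =>
    have h := Set.ext_iff.mp (hS.glob_δ Φ).1 x
    simp only [mem_ofPred_eq, mem_sdiff, mem_iUnion, exists_prop, not_exists, not_and,
      Sum.inl.injEq] at h
    exact h

theorem eq_γ_γ_of_inr_mem_δ (hS : IsOFS S) {a : S.F (k + 3)} {w : S.F (k + 1)}
    (h : Sum.inr w ∈ S.δ a) : w = S.γ (S.γ a) := by
  have hnl : S.nlDom a = ∅ := by
    ext x
    simp [nlDom, hS.dom_eps a w h]
  have hw : w ∈ ({S.γ (S.γ a)} : Set (S.F (k + 1))) := by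
    rw [hS.glob_γ a, hnl]
    exact ⟨⟨_, h, rfl⟩, by simp⟩
  exact hw

theorem δ_eq_of_γ_eq_of_realDom_eq (hS : IsOFS S) {p q : S.F (k + 2)} (hγ : S.γ p = S.γ q)
    (hdom : S.realDom p = S.realDom q) : S.δ p = S.δ q := by
  cases k with
  | zero =>
    ext (x | w)
    · exact Set.ext_iff.1 hdom x
    · exact hS.empty_bot.elim w
  | succ k =>
    -- an empty domain `1ᵤ` is determined by the codomain: `u = γ γ`
    have inr_mem : ∀ {p q : S.F (k + 3)}, S.γ p = S.γ q → S.realDom p = S.realDom q →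
        ∀ w, Sum.inr w ∈ S.δ p → Sum.inr w ∈ S.δ q := by
      intro p q hγ hdom w hw
      obtain ⟨e | w', he⟩ := hS.dom_nonempty q
      · have : e ∈ S.realDom p := hdom ▸ he
        simp [realDom, hS.dom_eps p w hw] at this
      · rwa [hS.eq_γ_γ_of_inr_mem_δ hw, hγ, ← hS.eq_γ_γ_of_inr_mem_δ he]
    ext (x | w)
    · exact Set.ext_iff.1 hdom x
    · exact ⟨inr_mem hγ hdom w, inr_mem hγ.symm hdom.symm w⟩

theorem δ_eq_singleton_of_realDom_eq_singleton (hS : IsOFS S) {β : S.F (k + 2)}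
    {u : S.F (k + 1)} (h : S.realDom β = {u}) : S.δ β = {Sum.inl u} := by
  have hu : Sum.inl u ∈ S.δ β := (Set.ext_iff.1 h u).2 rfl
  ext (x | w)
  · simpa [realDom] using Set.ext_iff.1 h x
  · refine ⟨fun hw => ?_, by simp⟩
    simp [hS.dom_eps β w hw] at hu

theorem reflTransGen_ltPStepIn_cod (hS : IsOFS S) (Φ : S.F (k + 3))
    {E : S.F (k + 2) ⊕ S.F (k + 1)} (hE : E ∈ S.δ Φ) :
    ReflTransGen (S.ltPStepIn Φ) (S.cod E) (S.γ (S.γ Φ)) := by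
  suffices ∀ t, (∃ E ∈ S.δ Φ, S.cod E = t) → ReflTransGen (S.ltPStepIn Φ) t (S.γ (S.γ Φ)) from
    this _ ⟨E, hE, rfl⟩
  intro t
  induction t using hS.wellFounded_gtP.induction with
  | _ t ih =>
  intro ht
  by_cases htop : t = S.γ (S.γ Φ)
  · rw [htop]
  have : t ∉ {y | ∃ e ∈ S.δ Φ, S.cod e = y} \ ⋃ x ∈ S.nlDom Φ, S.realDom x := by
    rw [← hS.glob_γ]
    exact htop
  obtain ⟨w, hw, htw⟩ : ∃ w ∈ S.nlDom Φ, t ∈ S.realDom w := by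
    by_contra hno
    exact this ⟨ht, by simpa using hno⟩
  have hstep : S.ltPStepIn Φ t (S.γ w) := ⟨w, hw, htw, rfl⟩
  exact .head hstep (ih _ (.single hstep.ltPStep) ⟨.inl w, hw.1, rfl⟩)

theorem transGen_ltPStepIn_of_mem_realDom (hS : IsOFS S) (Φ : S.F (k + 3)) {u : S.F (k + 1)}
    (hu : u ∈ S.realDom (S.γ Φ)) (hne : u ≠ S.γ (S.γ Φ)) :
    TransGen (S.ltPStepIn Φ) u (S.γ (S.γ Φ)) := by
  obtain ⟨⟨E, hE, huE⟩, -⟩ := (hS.inl_mem_δ_γ_iff Φ u).1 hu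
  have := (reflTransGen_ltPStepIn_of_mem_domM hE huE).trans (hS.reflTransGen_ltPStepIn_cod Φ hE)
  exact (reflTransGen_iff_eq_or_transGen.1 this).resolve_left hne.symm

theorem γ_leP_γ_of_ltP (hS : IsOFS S) {u v : S.F (k + 2)} (h : S.ltP u v) :
    S.leP (S.γ u) (S.γ v) := by
  have hstep : ∀ u v : S.F (k + 2), S.ltPStep u v → ReflTransGen S.ltPStep (S.γ u) (S.γ v) := by
    rintro u _ ⟨Φ, -, hu, rfl⟩
    exact ReflTransGen.mono (fun _ _ h => h.ltPStep) _ _ (hS.reflTransGen_ltPStepIn_cod Φ hu)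
  exact leP_iff_reflTransGen.2 (ReflTransGen.lift' S.γ hstep _ _ h.to_reflTransGen)

theorem γ_γ_eq_and_δ_γ_eq_of_δ_eq_singleton (hS : IsOFS S) {Φ : S.F (k + 3)}
    {u : S.F (k + 2)} (hΦ : S.δ Φ = {Sum.inl u}) :
    S.γ (S.γ Φ) = S.γ u ∧ S.δ (S.γ Φ) = S.δ u := by
  have hγu : ∀ w ∈ S.nlDom Φ, S.γ u ∉ S.realDom w := by
    rintro w ⟨hw, hwl⟩ hu
    obtain rfl : w = u := by simpa [hΦ] using hw
    exact hwl (hS.isLoop_of_inl_γ_mem_δ hu)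
  have hγ : S.γ (S.γ Φ) = S.γ u := by
    have : S.γ u ∈ ({S.γ (S.γ Φ)} : Set (S.F (k + 1))) := by
      rw [hS.glob_γ Φ]
      exact ⟨⟨.inl u, by simp [hΦ], rfl⟩, by simpa using hγu⟩
    exact this.symm
  have hdom : S.realDom (S.γ Φ) = S.realDom u := by
    ext x
    rw [realDom, mem_ofPred_eq, hS.inl_mem_δ_γ_iff]
    simp only [hΦ, mem_singleton_iff, exists_eq_left, domM]
    refine ⟨And.left, fun hx => ⟨hx, fun w hw hwx => hγu w hw ?_⟩⟩
    obtain rfl : w = u := by simpa [hΦ] using hw.1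
    rwa [hwx]
  exact ⟨hγ, hS.δ_eq_of_γ_eq_of_realDom_eq hγ hdom⟩

theorem sim_of_γ_eq_of_δ_eq_singleton (hS : IsOFS S) {u B : S.F (k + 2)} {w : S.F (k + 1)}
    (hB : S.δ B = {Sum.inl w}) (hBcod : ¬ ∃ Φ : S.F (k + 3), ¬ S.isLoop Φ ∧ S.γ Φ = B)
    (hu : S.γ u = w) (hw : S.ltP w (S.γ B)) : S.sim u B := by
  have hne : u ≠ B := by
    rintro rfl
    exact hS.strictP _ (hu ▸ hw)
  have hnot : ¬ S.leP (S.γ B) (S.γ u) := hu ▸ hS.not_leP_of_ltP hw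
  rcases hS.pencil₁ u B hne ⟨w, hu ▸ mem_insert _ _, mem_insert_of_mem _ (by simp [realDom, hB])⟩
    with (h | h) | (h | h)
  · exact h
  · exact absurd (γ_leP_γ_of_ltM (hS.sim_lt_minus B u h)) hnot
  · exact absurd h (not_ltP_of_not_cod hBcod)
  · exact absurd (hS.γ_leP_γ_of_ltP h) hnot

theorem not_sim_of_γ_eq_of_δ_eq_singleton (hS : IsOFS S) {y B : S.F (k + 2)} {w : S.F (k + 1)}
    (hB : S.δ B = {Sum.inl w}) (hy : S.γ y = S.γ B) (hw : S.ltP w (S.γ B)) : ¬ S.sim y B := by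
  intro h
  obtain ⟨s, hs, hle⟩ := exists_mem_realDom_of_ltM (hS.sim_lt_minus y B h)
  obtain rfl : s = w := by simpa [realDom, hB] using hs
  exact hS.not_leP_of_ltP hw (hy ▸ hle)

end IsOFS

namespace IsOFSHom

open PreOFS

variable {S T : PreOFS} {f : ∀ k, S.F k → T.F k} {k : ℕ}

theorem map_leP (hf : IsOFSHom S T f) {u v : S.F (k + 1)} (h : S.leP u v) :
    T.leP (f _ u) (f _ v) := by
  rw [leP_iff_reflTransGen] at h ⊢
  refine ReflTransGen.lift' (f (k + 1)) (fun x y ⟨α, _, hx, hy⟩ => ?_) _ _ h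
  rw [Function.onFun, ← leP_iff_reflTransGen, ← hy, hf.map_γ]
  exact leP_γ_of_mem_realDom ((hf.map_dom α).mapsTo hx)

theorem map_eq_of_leP_of_leP (hf : IsOFSHom S T f) (hT : IsOFS T) {u v w : S.F (k + 1)}
    (huv : f _ u = f _ v) (huw : S.leP u w) (hwv : S.leP w v) : f _ w = f _ u :=
  hT.leP_antisymm (huv ▸ hf.map_leP hwv) (hf.map_leP huw)

theorem not_sim_of_map_eq (hf : IsOFSHom S T f) (hT : IsOFS T) {x y : S.F (k + 1)}
    (h : f _ x = f _ y) : ¬ S.sim x y := fun hs =>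
  hT.sim_irrefl _ (h ▸ hf.map_sim x y hs)

theorem realDom_eq_singleton_of_isLoop_map (hf : IsOFSHom S T f) {Ψ : S.F (k + 2)}
    (hl : T.isLoop (f _ Ψ)) {x : S.F (k + 1)} (hx : x ∈ S.realDom Ψ) : S.realDom Ψ = {x} := by
  have hγ : ∀ y ∈ S.realDom Ψ, f _ y = T.γ (f _ Ψ) := fun y hy => by
    have := (hf.map_dom Ψ).mapsTo hy
    rw [isLoop] at hl
    simpa [realDom, hl] using this
  exact eq_singleton_iff_unique_mem.2
    ⟨hx, fun y hy => (hf.map_dom Ψ).injOn hy hx ((hγ y hy).trans (hγ x hx).symm)⟩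

theorem of_transGen_of_forall_not_between (hf : IsOFSHom S T f) (hT : IsOFS T)
    {r : S.F (k + 1) → S.F (k + 1) → Prop} (hr : ∀ x y, r x y → S.ltPStep x y)
    {u v : S.F (k + 1)} (hv : f _ v = f _ u)
    (hcov : ∀ w, f _ w = f _ u → S.ltP u w → ¬ S.ltP w v) (h : TransGen r u v) : r u v := by
  obtain ⟨w, huw, hwv⟩ := TransGen.tail'_iff.1 h
  rcases leP_iff_reflTransGen.2 (ReflTransGen.mono hr _ _ huw) with rfl | huw'
  · exact hwv
  · have hwv' : S.ltP w v := .single (hr _ _ hwv)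
    exact absurd hwv' (hcov w (hf.map_eq_of_leP_of_leP hT hv.symm (.inr huw') (.inr hwv')) huw')

/-- A `<⁺`-minimal face from `u` to `v` maps to a loop, so it is unary; if it were the codomain
of a non-loop `Φ`, the path from `u` to `v` through `δ Φ` would give a smaller one. -/
theorem exists_unary_of_forall_not_between (hf : IsOFSHom S T f) (hS : IsOFS S) (hT : IsOFS T)
    {u v : S.F (k + 1)} (huv : S.ltP u v) (hv : f _ v = f _ u)
    (hcov : ∀ w, f _ w = f _ u → S.ltP u w → ¬ S.ltP w v) :
    ∃ β : S.F (k + 2), S.δ β = {Sum.inl u} ∧ S.γ β = v ∧ ¬ S.isLoop β ∧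
      ¬ ∃ Φ : S.F (k + 3), ¬ S.isLoop Φ ∧ S.γ Φ = β := by
  obtain ⟨β, ⟨hβl, huβ, hβv⟩, hmin⟩ := hS.wellFounded_ltP.has_min
    {β | ¬ S.isLoop β ∧ Sum.inl u ∈ S.δ β ∧ S.γ β = v}
    (hf.of_transGen_of_forall_not_between hT (fun _ _ h => h) hv hcov huv)
  have hloop : T.isLoop (f _ β) := by
    refine hT.isLoop_of_inl_γ_mem_δ ?_
    rw [← hf.map_γ, hβv, hv]
    exact (hf.map_dom β).mapsTo huβ
  have hδ := hS.δ_eq_singleton_of_realDom_eq_singleton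
    (hf.realDom_eq_singleton_of_isLoop_map hloop huβ)
  refine ⟨β, hδ, hβv, hβl, ?_⟩
  rintro ⟨Φ, hΦl, rfl⟩
  have hpath := hS.transGen_ltPStepIn_of_mem_realDom Φ (u := u) (by simp [realDom, hδ])
    (by rw [hβv]; rintro rfl; exact hS.strictP _ huv)
  obtain ⟨e, he, hue, hev⟩ := hf.of_transGen_of_forall_not_between hT
    (fun _ _ h => h.ltPStep) hv hcov (hβv ▸ hpath)
  exact hmin e ⟨he.2, hue, hev⟩ (.single ⟨Φ, hΦl, he.1, rfl⟩)

end IsOFSHom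

/-- The fibre of `f` over `a` is `z 0 <⁺ ⋯ <⁺ z r` (values of `z` past `r` are irrelevant), and
`β i` is a unary face from `z i` to `z (i + 1)`. -/
structure FibreChain (S T : PreOFS) (f : ∀ k, S.F k → T.F k) {k : ℕ} (a : T.F (k + 1)) where
  r : ℕ
  z : ℕ → S.F (k + 1)
  β : Fin r → S.F (k + 2)
  mem_fibre_iff : ∀ x, f (k + 1) x = a ↔ ∃ i ≤ r, z i = x
  ltP_z : ∀ {i j}, i < j → j ≤ r → S.ltP (z i) (z j)
  δ_β : ∀ i, S.δ (β i) = {Sum.inl (z i)}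
  γ_β : ∀ i, S.γ (β i) = z (i + 1)
  not_isLoop_β : ∀ i, ¬ S.isLoop (β i)
  not_cod_β : ∀ i, ¬ ∃ Φ : S.F (k + 3), ¬ S.isLoop Φ ∧ S.γ Φ = β i

namespace FibreChain

open PreOFS

variable {S T : PreOFS} {f : ∀ k, S.F k → T.F k} {k : ℕ}

theorem map_z {a : T.F (k + 1)} (C : FibreChain S T f a) {i : ℕ} (hi : i ≤ C.r) :
    f _ (C.z i) = a :=
  (C.mem_fibre_iff _).2 ⟨i, hi, rfl⟩

theorem ltP_γ_β {a : T.F (k + 1)} (C : FibreChain S T f a) (i : Fin C.r) :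
    S.ltP (C.z i) (S.γ (C.β i)) :=
  C.γ_β i ▸ C.ltP_z (lt_add_one _) i.2

theorem sim_β {a : T.F (k + 1)} (C : FibreChain S T f a) (hS : IsOFS S) {u : S.F (k + 2)}
    {i : ℕ} (hu : S.γ u = C.z i) (m : ℕ) (him : i ≤ m) (hm : m < C.r) :
    S.sim u (C.β ⟨m, hm⟩) := by
  induction m, him using Nat.le_induction with
  | base => exact hS.sim_of_γ_eq_of_δ_eq_singleton (C.δ_β _) (C.not_cod_β _) hu (C.ltP_γ_β _)
  | succ m _ ih =>
    exact hS.sim_trans _ _ _ (ih (by omega)) (hS.sim_of_γ_eq_of_δ_eq_singleton (C.δ_β _)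
      (C.not_cod_β _) (C.γ_β ⟨m, by omega⟩) (C.ltP_γ_β _))

theorem γ_eq_of_map_eq {a : T.F (k + 2)} (C : FibreChain S T f (T.γ a)) (hS : IsOFS S)
    (hT : IsOFS T) (hf : IsOFSHom S T f) {x y : S.F (k + 2)} (hx : f _ x = a)
    (hy : f _ y = a) : S.γ x = S.γ y := by
  obtain ⟨i, hi, hxi⟩ := (C.mem_fibre_iff _).1 (by rw [hf.map_γ, hx])
  obtain ⟨j, hj, hyj⟩ := (C.mem_fibre_iff _).1 (by rw [hf.map_γ, hy])
  wlog hij : i < j generalizing x y i j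
  · rcases (not_lt.1 hij).eq_or_lt with rfl | hji
    · rw [← hxi, ← hyj]
    · exact (this hy hx j hj hyj i hi hxi hji).symm
  exfalso
  obtain ⟨m, rfl⟩ : ∃ m, j = m + 1 := ⟨j - 1, by omega⟩
  set B := C.β ⟨m, by omega⟩
  have hxB : S.sim x B := C.sim_β hS hxi.symm m (by omega) _
  have hyB : S.γ y = S.γ B := by rw [C.γ_β, ← hyj]
  have hxy := hf.not_sim_of_map_eq hT (hx.trans hy.symm)
  have hne : y ≠ B := by
    rintro rfl
    exact hxy hxB
  rcases hS.pencil₁ y B hne ⟨S.γ y, mem_insert _ _, hyB ▸ mem_insert _ _⟩ with (h | h) | (h | h)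
  · exact hS.not_sim_of_γ_eq_of_δ_eq_singleton (C.δ_β _) hyB (C.ltP_γ_β _) h
  · exact hxy (hS.sim_trans _ _ _ hxB h)
  · exact not_ltP_of_not_cod (C.not_cod_β _) h
  · have hsim : T.sim a (f _ B) := hx ▸ hf.map_sim _ _ hxB
    rcases hy ▸ hf.map_leP (.inr h) with heq | hlt
    · exact hT.sim_irrefl _ (heq ▸ hsim)
    · exact hT.disj _ _ (.inl hsim) (.inr hlt)

theorem parallel {a : T.F (k + 2)} (C : FibreChain S T f a) (hS : IsOFS S) {i : ℕ}
    (hi : i ≤ C.r) : S.γ (C.z i) = S.γ (C.z 0) ∧ S.δ (C.z i) = S.δ (C.z 0) := by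
  induction i with
  | zero => exact ⟨rfl, rfl⟩
  | succ i ih =>
    have := hS.γ_γ_eq_and_δ_γ_eq_of_δ_eq_singleton (C.δ_β ⟨i, hi⟩)
    rw [C.γ_β] at this
    exact ⟨this.1.trans (ih (by omega)).1, this.2.trans (ih (by omega)).2⟩

theorem fibre_eq {a : T.F (k + 1)} (C : FibreChain S T f a) :
    {x | f _ x = a} = insert (C.z 0) {y | ∃ i, S.γ (C.β i) = y} := by
  ext x
  simp only [mem_ofPred_eq, mem_insert_iff, C.mem_fibre_iff, C.γ_β]
  constructor
  · rintro ⟨_ | i, hi, rfl⟩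
    · exact .inl rfl
    · exact .inr ⟨⟨i, hi⟩, rfl⟩
  · rintro (rfl | ⟨i, rfl⟩)
    · exact ⟨0, by omega, rfl⟩
    · exact ⟨i + 1, i.2, rfl⟩

end FibreChain

namespace IsOFSHom

open PreOFS

variable {S T : PreOFS} {f : ∀ k, S.F k → T.F k} {k : ℕ}

theorem nonempty_fibreChain_of_trichotomous (hf : IsOFSHom S T f) (hS : IsOFS S)
    (hT : IsOFS T) {a : T.F (k + 1)} (hne : ∃ x, f _ x = a)
    (htri : ∀ x y, f _ x = a → f _ y = a → x = y ∨ S.ltP x y ∨ S.ltP y x) :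
    Nonempty (FibreChain S T f a) := by
  have := hS.fin (k + 1)
  have := hS.isStrictOrder_ltP (k := k)
  obtain ⟨r, z, hz, hlt⟩ := exists_enum_of_trichotomous (R := S.ltP) (A := {x | f _ x = a}) hne
    fun x hx y hy => htri x y hx hy
  have hza : ∀ {i}, i ≤ r → f _ (z i) = a := fun hi => (hz _).2 ⟨_, hi, rfl⟩
  have hidx : ∀ {i j}, i ≤ r → j ≤ r → S.ltP (z i) (z j) → i < j := fun hi hj h => by
    by_contra hji
    rcases (not_lt.1 hji).eq_or_lt with rfl | hji
    · exact hS.strictP _ h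
    · exact hS.strictP _ (h.trans (hlt hji hi))
  have hcov : ∀ i : Fin r, ∀ w, f _ w = f _ (z i) → S.ltP (z i) w → ¬ S.ltP w (z (i + 1)) := by
    intro i w hw h₁ h₂
    obtain ⟨j, hj, rfl⟩ := (hz w).1 (hw.trans (hza i.2.le))
    have := hidx i.2.le hj h₁
    have := hidx hj i.2 h₂
    omega
  choose β hβ using fun i : Fin r =>
    hf.exists_unary_of_forall_not_between hS hT (hlt (lt_add_one _) i.2)
      ((hza i.2).trans (hza i.2.le).symm) (hcov i)
  exact ⟨⟨r, z, β, hz, hlt, fun i => (hβ i).1, fun i => (hβ i).2.1, fun i => (hβ i).2.2.1,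
    fun i => (hβ i).2.2.2⟩⟩

theorem nonempty_fibreChain (hf : IsOFSHom S T f) (hS : IsOFS S) (hT : IsOFS T) :
    ∀ {k : ℕ} {a : T.F (k + 1)}, (∃ x, f _ x = a) → Nonempty (FibreChain S T f a)
  | 0, _, hne => hf.nonempty_fibreChain_of_trichotomous hS hT hne fun x y _ _ => hS.linearP₀ x y
  | k + 1, a, ⟨x₀, hx₀⟩ => by
    obtain ⟨C⟩ := hf.nonempty_fibreChain hS hT (a := T.γ a) ⟨S.γ x₀, by rw [hf.map_γ, hx₀]⟩
    refine hf.nonempty_fibreChain_of_trichotomous hS hT ⟨x₀, hx₀⟩ fun x y hx hy => ?_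
    by_cases hxy : x = y
    · exact .inl hxy
    have hγ := C.γ_eq_of_map_eq hS hT hf hx hy
    rcases hS.pencil₁ x y hxy ⟨S.γ x, mem_insert _ _, hγ ▸ mem_insert _ _⟩ with (h | h) | h
    · exact absurd h (hf.not_sim_of_map_eq hT (hx.trans hy.symm))
    · exact absurd h (hf.not_sim_of_map_eq hT (hy.trans hx.symm))
    · exact .inr h

end IsOFSHom

/-- the fibre of a monotone morphism over a face `a` (if
nonempty) consists of pairwise parallel faces, is linearly ordered by `<⁺`,
and is `{b} ∪ {γ(αᵢ)}` for a flat upper path `b, α₁, …, α_r, c` through unary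
faces that are not codomains of non-loops. -/
theorem stmt16 (S T : PreOFS) (hS : IsOFS S) (hT : IsOFS T)
    (f : ∀ k, S.F k → T.F k) (hf : IsOFSHom S T f)
    {k : ℕ} (a : T.F (k + 2)) (hne : ∃ b : S.F (k + 2), f (k + 2) b = a) :
    (∀ b c : S.F (k + 2), f (k + 2) b = a → f (k + 2) c = a →
        S.γ b = S.γ c ∧ S.δ b = S.δ c) ∧
    (∀ b c : S.F (k + 2), f (k + 2) b = a → f (k + 2) c = a →
        b = c ∨ S.ltP b c ∨ S.ltP c b) ∧
    (∃ b c : S.F (k + 2), f (k + 2) b = a ∧ f (k + 2) c = a ∧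
      ∃ r : ℕ, ∃ α : Fin r → S.F (k + 3),
        (∀ i : Fin r,
            (∃ x, S.realDom (α i) = {x}) ∧ ¬ S.isLoop (α i) ∧
              ¬ ∃ β : S.F (k + 4), ¬ S.isLoop β ∧ S.γ β = α i) ∧
        (∀ h : 0 < r, Sum.inl b ∈ S.δ (α ⟨0, h⟩)) ∧
        (∀ (i : ℕ) (h : i + 1 < r),
            Sum.inl (S.γ (α ⟨i, by omega⟩)) ∈ S.δ (α ⟨i + 1, h⟩)) ∧
        (∀ h : 0 < r, S.γ (α ⟨r - 1, by omega⟩) = c) ∧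
        (r = 0 → b = c) ∧
        {x : S.F (k + 2) | f (k + 2) x = a} =
          insert b {y | ∃ i : Fin r, S.γ (α i) = y}) := by
  obtain ⟨C⟩ := hf.nonempty_fibreChain hS hT hne
  refine ⟨fun b c hb hc => ?_, fun b c hb hc => ?_, C.z 0, C.z C.r, C.map_z (Nat.zero_le _),
    C.map_z le_rfl, C.r, C.β, fun i => ⟨⟨C.z i, by simp [PreOFS.realDom, C.δ_β]⟩, C.not_isLoop_β i,
    C.not_cod_β i⟩, fun _ => by simp [C.δ_β], fun i _ => by simp [C.δ_β, C.γ_β],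
    fun h => by simp [C.γ_β, Nat.sub_add_cancel h], fun h => by rw [h], C.fibre_eq⟩
  · obtain ⟨i, hi, rfl⟩ := (C.mem_fibre_iff b).1 hb
    obtain ⟨j, hj, rfl⟩ := (C.mem_fibre_iff c).1 hc
    obtain ⟨hγi, hδi⟩ := C.parallel hS hi
    obtain ⟨hγj, hδj⟩ := C.parallel hS hj
    exact ⟨hγi.trans hγj.symm, hδi.trans hδj.symm⟩
  · obtain ⟨i, hi, rfl⟩ := (C.mem_fibre_iff b).1 hb
    obtain ⟨j, hj, rfl⟩ := (C.mem_fibre_iff c).1 hc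
    rcases lt_trichotomy i j with hij | rfl | hji
    · exact .inr (.inl (C.ltP_z hij hj))
    · exact .inl rfl
    · exact .inr (.inr (C.ltP_z hji hi))
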